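/- Let Λ, β, α, μ₁, μ₂, d₁, d₂ > 0, S₀ = Λ/μ₁, c > 0, and θ ∈ ℝ with sin θ > 0 and cos θ > 0. Suppose S, I : ℝ → ℝ are differentiable, 0 < S(ξ) ≤ S₀ and I(ξ) > 0 for all ξ, and (S, I) solves the traveling-wave system cS'(ξ) = d₁𝔍[S](ξ) + Λ − βS(ξ)I(ξ)/(1 + αI(ξ)) − μ₁S(ξ), cI'(ξ) = d₂𝔍[I](ξ) + βS(ξ)I(ξ)/(1 + αI(ξ)) − μ₂I(ξ) for all ξ ∈ ℝ. Then there exists a constant C > 0 such that for all ξ ∈ ℝ: I(ξ + sin θ)/I(ξ) ≤ C, I(ξ − sin θ)/I(ξ) ≤ C, I(ξ + cos θ)/I(ξ) ≤ C, I(ξ − cos θ)/I(ξ) ≤ C, and |I'(ξ)|/I(ξ) ≤ C. -/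

import Mathlib

/-- Discrete Laplacian in direction `θ`. -/
noncomputable def lap (θ : ℝ) (φ : ℝ → ℝ) (ξ : ℝ) : ℝ :=
  φ (ξ + Real.sin θ) + φ (ξ - Real.sin θ) + φ (ξ + Real.cos θ) + φ (ξ - Real.cos θ) - 4 * φ ξ

/-!
Dropping the nonnegative incidence term and the other three shifts, the `I`-equation gives
`a * I (t + σ) ≤ I' t + K * I t` with `a = d₂ / c`, `K = (4 d₂ + μ₂) / c`, for `σ = sin θ, cos θ`.
Hence `g t = exp (K t) * I t` is nondecreasing, which bounds `I (ξ - σ)` by `I ξ`. Forward, the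
mean value theorem on `[ξ - σ/2, ξ]` gives a point `η` with `(σ/2) g' η ≤ g ξ`, while
`g' η ≥ a exp (-K σ) g (η + σ) ≥ a exp (-K σ) g (ξ + σ/2)`; two such half steps bound
`I (ξ + σ)` by `I ξ`. With all four shifts controlled, the equation itself bounds `|I'| / I`.
-/

open Real

section ShiftBounds

variable {I : ℝ → ℝ} {a K h σ : ℝ}

theorem hasDerivAt_exp_mul_mul {t : ℝ} (hI : DifferentiableAt ℝ I t) :
    HasDerivAt (fun t => exp (K * t) * I t) (exp (K * t) * (deriv I t + K * I t)) t := by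
  refine (((hasDerivAt_id t).const_mul K).exp.mul hI.hasDerivAt).congr_deriv ?_
  simp only [id, mul_one]
  ring

theorem monotone_exp_mul_mul (hI : Differentiable ℝ I) (h : ∀ t, 0 ≤ deriv I t + K * I t) :
    Monotone fun t => exp (K * t) * I t :=
  monotone_of_deriv_nonneg (fun t => (hasDerivAt_exp_mul_mul (hI t)).differentiableAt)
    fun t => (hasDerivAt_exp_mul_mul (hI t)).deriv ▸ mul_nonneg (exp_pos _).le (h t)

theorem apply_add_le_of_le_deriv_add (hI : Differentiable ℝ I) (hI₀ : ∀ t, 0 ≤ I t)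
    (ha : 0 < a) (hh : 0 < h) (hshift : ∀ t, a * I (t + 2 * h) ≤ deriv I t + K * I t)
    (ξ : ℝ) : I (ξ + h) ≤ exp (K * h) / (a * h) * I ξ := by
  set g : ℝ → ℝ := fun t => exp (K * t) * I t with hg
  have hmono : Monotone g :=
    monotone_exp_mul_mul hI fun t => (mul_nonneg ha.le (hI₀ _)).trans (hshift t)
  obtain ⟨η, ⟨hη, -⟩, hslope⟩ := exists_hasDerivAt_eq_slope g _ (sub_lt_self ξ hh)
    (fun t _ => (hasDerivAt_exp_mul_mul (hI t)).continuousAt.continuousWithinAt)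
    fun t _ => hasDerivAt_exp_mul_mul (hI t)
  rw [sub_sub_cancel] at hslope
  have hgξ : a * h * g (ξ + h) ≤ exp (2 * K * h) * g ξ := by
    calc a * h * g (ξ + h) ≤ h * (a * g (η + 2 * h)) := by
          rw [mul_assoc, mul_left_comm]
          gcongr
          exact hmono (by linarith)
      _ = h * exp (2 * K * h) * (exp (K * η) * (a * I (η + 2 * h))) := by
          simp only [hg]; rw [show K * (η + 2 * h) = 2 * K * h + K * η by ring, exp_add]; ring
      _ ≤ h * exp (2 * K * h) * (exp (K * η) * (deriv I η + K * I η)) := by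
          gcongr; exact hshift η
      _ = exp (2 * K * h) * (g ξ - g (ξ - h)) := by
          rw [hslope]; field_simp
      _ ≤ exp (2 * K * h) * g ξ := by
          gcongr; exact sub_le_self _ (mul_nonneg (exp_pos _).le (hI₀ _))
  have hexp : exp (2 * K * h) * exp (K * ξ) = exp (K * (ξ + h)) * exp (K * h) := by
    rw [← exp_add, ← exp_add]; ring_nf
  simp only [hg] at hgξ
  rw [← mul_assoc (exp (2 * K * h)), hexp] at hgξ
  rw [div_mul_eq_mul_div, le_div_iff₀ (by positivity)]
  refine le_of_mul_le_mul_left ?_ (exp_pos (K * (ξ + h)))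
  linarith

theorem apply_sub_le_exp_mul (hI : Differentiable ℝ I) (h : ∀ t, 0 ≤ deriv I t + K * I t)
    (hσ : 0 ≤ σ) (ξ : ℝ) : I (ξ - σ) ≤ exp (K * σ) * I ξ := by
  have hg : exp (K * (ξ - σ)) * I (ξ - σ) ≤ exp (K * ξ) * I ξ :=
    monotone_exp_mul_mul hI h (sub_le_self ξ hσ)
  rw [show K * ξ = K * (ξ - σ) + K * σ by ring, exp_add, mul_assoc] at hg
  exact le_of_mul_le_mul_left hg (exp_pos _)

theorem apply_add_two_mul_le_of_le_deriv_add (hI : Differentiable ℝ I) (hI₀ : ∀ t, 0 ≤ I t)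
    (ha : 0 < a) (hh : 0 < h) (hshift : ∀ t, a * I (t + 2 * h) ≤ deriv I t + K * I t)
    (ξ : ℝ) : I (ξ + 2 * h) ≤ (exp (K * h) / (a * h)) ^ 2 * I ξ := by
  have step := apply_add_le_of_le_deriv_add hI hI₀ ha hh hshift
  calc I (ξ + 2 * h) = I (ξ + h + h) := by ring_nf
    _ ≤ exp (K * h) / (a * h) * I (ξ + h) := step _
    _ ≤ exp (K * h) / (a * h) * (exp (K * h) / (a * h) * I ξ) := by gcongr; exact step ξ
    _ = (exp (K * h) / (a * h)) ^ 2 * I ξ := by ring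

theorem exists_shift_le_mul (hI : Differentiable ℝ I) (hI₀ : ∀ t, 0 ≤ I t)
    (ha : 0 < a) (hσ : 0 < σ) (hshift : ∀ t, a * I (t + σ) ≤ deriv I t + K * I t) :
    ∃ C, 0 < C ∧ ∀ ξ, I (ξ + σ) ≤ C * I ξ ∧ I (ξ - σ) ≤ C * I ξ := by
  set M := (exp (K * (σ / 2)) / (a * (σ / 2))) ^ 2
  have hM : 0 ≤ M := sq_nonneg _
  have hforward := apply_add_two_mul_le_of_le_deriv_add hI hI₀ ha (half_pos hσ)
    (by simpa only [mul_div_cancel₀ σ two_ne_zero] using hshift)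
  have hbackward := apply_sub_le_exp_mul hI
    (fun t => (mul_nonneg ha.le (hI₀ _)).trans (hshift t)) hσ.le
  refine ⟨M + exp (K * σ), by positivity, fun ξ => ⟨?_, ?_⟩⟩
  · have := hforward ξ
    rw [mul_div_cancel₀ σ two_ne_zero] at this
    nlinarith [exp_pos (K * σ), hI₀ ξ]
  · nlinarith [hbackward ξ, hI₀ ξ]

end ShiftBounds

theorem lap_add_four_mul (θ : ℝ) (φ : ℝ → ℝ) (ξ : ℝ) :
    lap θ φ ξ + 4 * φ ξ = φ (ξ + sin θ) + φ (ξ - sin θ) + φ (ξ + cos θ) + φ (ξ - cos θ) := by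
  unfold lap; ring

theorem saturated_incidence_le {β α S S₀ I : ℝ} (hβ : 0 ≤ β) (hα : 0 ≤ α) (hS : 0 ≤ S)
    (hSS₀ : S ≤ S₀) (hI : 0 ≤ I) : β * S * I / (1 + α * I) ≤ β * S₀ * I :=
  (div_le_self (by positivity) (le_add_of_nonneg_right (by positivity))).trans
    (by gcongr)

section InfectedEquation

variable {β α μ₂ d₂ θ c S₀ C₁ C₂ ξ : ℝ} {S I : ℝ → ℝ}

theorem shift_le_deriv_add (hc : 0 < c) (hd₂ : 0 ≤ d₂) (hβ : 0 ≤ β) (hα : 0 ≤ α)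
    (hS : 0 ≤ S ξ) (hI : ∀ x, 0 ≤ I x)
    (hIeq : c * deriv I ξ = d₂ * lap θ I ξ + β * S ξ * I ξ / (1 + α * I ξ) - μ₂ * I ξ) :
    d₂ / c * I (ξ + sin θ) ≤ deriv I ξ + (4 * d₂ + μ₂) / c * I ξ ∧
      d₂ / c * I (ξ + cos θ) ≤ deriv I ξ + (4 * d₂ + μ₂) / c * I ξ := by
  have hN : 0 ≤ β * S ξ * I ξ / (1 + α * I ξ) := by have := hI ξ; positivity
  have hsum := lap_add_four_mul θ I ξ
  simp only [div_mul_eq_mul_div, div_le_iff₀ hc, add_mul, div_mul_cancel₀ _ hc.ne']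
  constructor <;> nlinarith [hI (ξ + sin θ), hI (ξ - sin θ), hI (ξ + cos θ), hI (ξ - cos θ)]

theorem abs_deriv_le_of_shift_le (hc : 0 < c) (hd₂ : 0 ≤ d₂) (hβ : 0 ≤ β) (hα : 0 ≤ α)
    (hμ₂ : 0 ≤ μ₂) (hS : 0 ≤ S ξ) (hSS₀ : S ξ ≤ S₀) (hI : ∀ x, 0 ≤ I x)
    (hIeq : c * deriv I ξ = d₂ * lap θ I ξ + β * S ξ * I ξ / (1 + α * I ξ) - μ₂ * I ξ)
    (h₁ : I (ξ + sin θ) ≤ C₁ * I ξ) (h₂ : I (ξ - sin θ) ≤ C₁ * I ξ)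
    (h₃ : I (ξ + cos θ) ≤ C₂ * I ξ) (h₄ : I (ξ - cos θ) ≤ C₂ * I ξ) :
    |deriv I ξ| ≤ (2 * d₂ * (C₁ + C₂) + β * S₀ + 4 * d₂ + μ₂) / c * I ξ := by
  have hN : 0 ≤ β * S ξ * I ξ / (1 + α * I ξ) := by have := hI ξ; positivity
  have hN' := saturated_incidence_le hβ hα hS hSS₀ (hI ξ)
  have hS₀ : 0 ≤ S₀ := hS.trans hSS₀
  have hsum := lap_add_four_mul θ I ξ
  have hcI' : |c * deriv I ξ| ≤ (2 * d₂ * (C₁ + C₂) + β * S₀ + 4 * d₂ + μ₂) * I ξ := by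
    rw [abs_le]
    constructor <;>
      nlinarith [hI (ξ + sin θ), hI (ξ - sin θ), hI (ξ + cos θ), hI (ξ - cos θ), hI ξ]
  rw [abs_mul, abs_of_pos hc] at hcI'
  rw [div_mul_eq_mul_div, le_div_iff₀ hc]
  linarith

end InfectedEquation

theorem stmt_14_general (β α μ₂ d₂ θ c : ℝ)
    (hβ : 0 < β) (hα : 0 < α) (hμ₂ : 0 < μ₂)
    (hd₂ : 0 < d₂) (hc : 0 < c)
    (S₀ : ℝ)
    (hsin : 0 < Real.sin θ) (hcos : 0 < Real.cos θ)
    (S I : ℝ → ℝ)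
    (hIdiff : Differentiable ℝ I)
    (hSpos : ∀ ξ : ℝ, 0 < S ξ) (hSbd : ∀ ξ : ℝ, S ξ ≤ S₀)
    (hIpos : ∀ ξ : ℝ, 0 < I ξ)
    (hIeq : ∀ ξ : ℝ, c * deriv I ξ =
      d₂ * lap θ I ξ + β * S ξ * I ξ / (1 + α * I ξ) - μ₂ * I ξ) :
    ∃ C : ℝ, 0 < C ∧ ∀ ξ : ℝ,
      I (ξ + Real.sin θ) / I ξ ≤ C ∧ I (ξ - Real.sin θ) / I ξ ≤ C ∧
      I (ξ + Real.cos θ) / I ξ ≤ C ∧ I (ξ - Real.cos θ) / I ξ ≤ C ∧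
      |deriv I ξ| / I ξ ≤ C := by
  have hI₀ ξ : 0 ≤ I ξ := (hIpos ξ).le
  have hshift t := shift_le_deriv_add hc hd₂.le hβ.le hα.le (hSpos t).le hI₀ (hIeq t)
  obtain ⟨C₁, hC₁, hsin_le⟩ :=
    exists_shift_le_mul hIdiff hI₀ (div_pos hd₂ hc) hsin fun t => (hshift t).1
  obtain ⟨C₂, hC₂, hcos_le⟩ :=
    exists_shift_le_mul hIdiff hI₀ (div_pos hd₂ hc) hcos fun t => (hshift t).2
  set M := (2 * d₂ * (C₁ + C₂) + β * S₀ + 4 * d₂ + μ₂) / c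
  have hM : 0 ≤ M := by have := (hSpos 0).le.trans (hSbd 0); positivity
  refine ⟨C₁ + C₂ + M, by positivity, fun ξ => ?_⟩
  have hderiv := abs_deriv_le_of_shift_le hc hd₂.le hβ.le hα.le hμ₂.le (hSpos ξ).le (hSbd ξ)
    hI₀ (hIeq ξ) (hsin_le ξ).1 (hsin_le ξ).2 (hcos_le ξ).1 (hcos_le ξ).2
  simp only [div_le_iff₀ (hIpos ξ)]
  have := mul_nonneg hC₁.le (hI₀ ξ)
  have := mul_nonneg hC₂.le (hI₀ ξ)
  have := mul_nonneg hM (hI₀ ξ)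
  refine ⟨?_, ?_, ?_, ?_, ?_⟩ <;> linarith [hsin_le ξ, hcos_le ξ]

theorem stmt_14 (Λ β α μ₁ μ₂ d₁ d₂ θ c : ℝ)
    (hΛ : 0 < Λ) (hβ : 0 < β) (hα : 0 < α) (hμ₁ : 0 < μ₁) (hμ₂ : 0 < μ₂)
    (hd₁ : 0 < d₁) (hd₂ : 0 < d₂) (hc : 0 < c)
    (S₀ : ℝ) (hS₀ : S₀ = Λ / μ₁)
    (hsin : 0 < Real.sin θ) (hcos : 0 < Real.cos θ)
    (S I : ℝ → ℝ)
    (hSdiff : Differentiable ℝ S) (hIdiff : Differentiable ℝ I)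
    (hSpos : ∀ ξ : ℝ, 0 < S ξ) (hSbd : ∀ ξ : ℝ, S ξ ≤ S₀)
    (hIpos : ∀ ξ : ℝ, 0 < I ξ)
    (hSeq : ∀ ξ : ℝ, c * deriv S ξ =
      d₁ * lap θ S ξ + Λ - β * S ξ * I ξ / (1 + α * I ξ) - μ₁ * S ξ)
    (hIeq : ∀ ξ : ℝ, c * deriv I ξ =
      d₂ * lap θ I ξ + β * S ξ * I ξ / (1 + α * I ξ) - μ₂ * I ξ) :
    ∃ C : ℝ, 0 < C ∧ ∀ ξ : ℝ,
      I (ξ + Real.sin θ) / I ξ ≤ C ∧ I (ξ - Real.sin θ) / I ξ ≤ C ∧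
      I (ξ + Real.cos θ) / I ξ ≤ C ∧ I (ξ - Real.cos θ) / I ξ ≤ C ∧
      |deriv I ξ| / I ξ ≤ C :=
  stmt_14_general β α μ₂ d₂ θ c hβ hα hμ₂ hd₂ hc S₀ hsin hcos S I hIdiff hSpos hSbd hIpos hIeq
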